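/- arXiv:1904.00706 — 2 statements merged into one kernel-verified Lean document; each statement's English description precedes it below -/
import Mathlib

section
/- Let V be a finite-dimensional vector space of dimension N, S a set of endomorphisms of V, V₀ a subspace, and φ : V → K a linear functional. If φ vanishes on (f_d ∘ ⋯ ∘ f_1)(V₀) for every d ≤ N and every f_1,...,f_d ∈ S, then φ vanishes on (f_d ∘ ⋯ ∘ f_1)(V₀) for every d ∈ ℕ and every f_1,...,f_d ∈ S. -/
open Submodule

section Aux

variable {K V : Type*} [Field K] [AddCommGroup V] [Module K V]

def myComp (e : ℕ) (f : Fin e → (V →ₗ[K] V)) : V →ₗ[K] V :=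
  (List.ofFn f).foldl (fun g fi => fi ∘ₗ g) LinearMap.id

lemma myComp_succ (e : ℕ) (f : Fin (e + 1) → (V →ₗ[K] V)) :
    myComp (e + 1) f = f (Fin.last e) ∘ₗ myComp e (fun i => f i.castSucc) := by
  unfold myComp
  rw [List.ofFn_succ', List.concat_eq_append, List.foldl_append]
  simp

variable (S : Set (V →ₗ[K] V)) (V₀ : Submodule K V)

def myPSet (d : ℕ) : Set V :=
  {x | ∃ e ≤ d, ∃ f : Fin e → (V →ₗ[K] V), (∀ i, f i ∈ S) ∧ ∃ v ∈ V₀, myComp e f v = x}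

def myU (d : ℕ) : Submodule K V := span K (myPSet S V₀ d)

lemma myU_mono {d d' : ℕ} (hdd : d ≤ d') : myU S V₀ d ≤ myU S V₀ d' := by
  apply span_mono
  rintro x ⟨e, he, f, hf, v, hv, rfl⟩
  exact ⟨e, he.trans hdd, f, hf, v, hv, rfl⟩

lemma myU_map {g : V →ₗ[K] V} (hg : g ∈ S) (d : ℕ) :
    (myU S V₀ d).map g ≤ myU S V₀ (d + 1) := by
  rw [myU, map_span, span_le]
  rintro _ ⟨x, ⟨e, he, f, hf, v, hv, rfl⟩, rfl⟩
  apply subset_span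
  refine ⟨e + 1, by omega, Fin.snoc f g, ?_, v, hv, ?_⟩
  · intro i
    refine Fin.lastCases ?_ ?_ i
    · simpa using hg
    · intro j; simpa using hf j
  · rw [myComp_succ]
    simp

lemma myU_step (d : ℕ) :
    myU S V₀ (d + 1) ≤ myU S V₀ d ⊔ ⨆ g ∈ S, (myU S V₀ d).map g := by
  rw [myU, span_le]
  rintro x ⟨e, he, f, hf, v, hv, rfl⟩
  rcases Nat.lt_or_ge e (d + 1) with he' | he'
  · exact le_sup_left (α := Submodule K V)
      (subset_span ⟨e, by omega, f, hf, v, hv, rfl⟩)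
  · have : e = d + 1 := by omega
    subst this
    rw [myComp_succ]
    have hx : myComp d (fun i => f i.castSucc) v ∈ myU S V₀ d :=
      subset_span ⟨d, le_refl d, _, fun i => hf _, v, hv, rfl⟩
    have : f (Fin.last d) (myComp d (fun i => f i.castSucc) v) ∈
        (myU S V₀ d).map (f (Fin.last d)) := mem_map_of_mem hx
    have hle : (myU S V₀ d).map (f (Fin.last d)) ≤ ⨆ g ∈ S, (myU S V₀ d).map g :=
      le_iSup₂ (f := fun g _ => (myU S V₀ d).map g) (f (Fin.last d)) (hf (Fin.last d))
    exact le_sup_right (α := Submodule K V) (hle this)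

lemma myU_stab {d : ℕ} (hd : myU S V₀ d = myU S V₀ (d + 1)) :
    ∀ k, myU S V₀ (d + k) = myU S V₀ d := by
  intro k
  induction k with
  | zero => rfl
  | succ k ih =>
    refine le_antisymm ?_ (myU_mono S V₀ (by omega))
    calc myU S V₀ (d + k + 1)
        ≤ myU S V₀ (d + k) ⊔ ⨆ g ∈ S, (myU S V₀ (d + k)).map g := myU_step S V₀ _
      _ ≤ myU S V₀ d := by
          rw [ih]
          apply sup_le (le_refl _)
          apply iSup₂_le
          intro g hg
          exact (myU_map S V₀ hg d).trans hd.ge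

end Aux

theorem functional_vanishing_on_short_compositions {K V : Type*} [Field K]
    [AddCommGroup V] [Module K V] [FiniteDimensional K V]
    (N : ℕ) (hN : Module.finrank K V = N)
    (S : Set (V →ₗ[K] V)) (V₀ : Submodule K V) (φ : V →ₗ[K] K)
    (h : ∀ d ≤ N, ∀ f : Fin d → (V →ₗ[K] V), (∀ i, f i ∈ S) →
      ∀ v ∈ V₀, φ (((List.ofFn f).foldl (fun g fi => fi ∘ₗ g) LinearMap.id) v) = 0) :
    ∀ d : ℕ, ∀ f : Fin d → (V →ₗ[K] V), (∀ i, f i ∈ S) →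
      ∀ v ∈ V₀, φ (((List.ofFn f).foldl (fun g fi => fi ∘ₗ g) LinearMap.id) v) = 0 := by
  -- φ vanishes on myU S V₀ N
  have hker : myU S V₀ N ≤ LinearMap.ker φ := by
    rw [myU, span_le]
    rintro x ⟨e, he, f, hf, v, hv, rfl⟩
    exact h e he f hf v hv
  -- the chain stabilizes at some e ≤ N
  have hgrow : ∀ d, (∀ e < d, myU S V₀ e ≠ myU S V₀ (e + 1)) →
      d ≤ Module.finrank K (myU S V₀ d) := by
    intro d
    induction d with
    | zero => intro _; exact Nat.zero_le _
    | succ d ih =>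
      intro hd
      have h1 : d ≤ Module.finrank K (myU S V₀ d) := ih fun e he => hd e (by omega)
      have h2 : myU S V₀ d < myU S V₀ (d + 1) :=
        lt_of_le_of_ne (myU_mono S V₀ (by omega)) (hd d (by omega))
      have := Submodule.finrank_lt_finrank_of_lt h2
      omega
  have hstab : ∃ e ≤ N, myU S V₀ e = myU S V₀ (e + 1) := by
    by_contra hc
    push_neg at hc
    have := hgrow (N + 1) fun e he => hc e (by omega)
    have hle : Module.finrank K (myU S V₀ (N + 1)) ≤ N := by
      rw [← hN]; exact Submodule.finrank_le _
    omega
  obtain ⟨e, heN, he⟩ := hstab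
  intro d f hf v hv
  have hmem : myComp d f v ∈ myU S V₀ d :=
    subset_span ⟨d, le_refl d, f, hf, v, hv, rfl⟩
  rcases le_or_gt d N with hdN | hdN
  · exact h d hdN f hf v hv
  · have hd : d = e + (d - e) := by omega
    have : myU S V₀ d ≤ LinearMap.ker φ := by
      rw [hd, myU_stab S V₀ he]
      exact (myU_mono S V₀ heN).trans hker
    exact this hmem
end

section
/- Let H₁, H₂ be finite-dimensional spaces, and for each parameter q in a set Q let B_{1,q} : H₁ → H₁, B_{2,q} : H₂ → H₂, G_{1,q} : W → H₁, G_{2,q} : W → H₂ be linear maps, and C₁ : H₁ → K, C₂ : H₂ → K linear functionals. Set N := dim H₁ + dim H₂. If C₁ ∘ B_{1,q_d} ∘ ⋯ ∘ B_{1,q_1} ∘ G_{1,q_0} = C₂ ∘ B_{2,q_d} ∘ ⋯ ∘ B_{2,q_1} ∘ G_{2,q_0} for all d ≤ N and all q_0,...,q_d ∈ Q, then the same equality holds for all d ∈ ℕ and all q_0,...,q_d ∈ Q. -/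
private lemma foldl_ofFn_succ_aux {K V V' : Type*} [Semiring K] [AddCommMonoid V] [Module K V]
    [AddCommMonoid V'] [Module K V'] (M : ℕ → V' →ₗ[K] V') (g : V →ₗ[K] V') (d : ℕ) :
    (List.ofFn fun i : Fin (d+1) => M (i : ℕ)).foldl (fun g f => f ∘ₗ g) g
      = M d ∘ₗ (List.ofFn fun i : Fin d => M (i : ℕ)).foldl (fun g f => f ∘ₗ g) g := by
  rw [List.ofFn_succ']
  simp [List.foldl_concat]

private lemma foldl_congr_aux {K W V : Type*} [Semiring K] [AddCommMonoid W] [Module K W]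
    [AddCommMonoid V] [Module K V] {Q : Type*}
    (B : Q → (V →ₗ[K] V)) (G : Q → (W →ₗ[K] V)) (d : ℕ) (q q' : ℕ → Q)
    (hq : ∀ n ≤ d, q n = q' n) :
    (List.ofFn fun i : Fin d => B (q (i + 1))).foldl (fun g f => f ∘ₗ g) (G (q 0))
      = (List.ofFn fun i : Fin d => B (q' (i + 1))).foldl (fun g f => f ∘ₗ g) (G (q' 0)) := by
  have h1 : (fun i : Fin d => B (q (i + 1))) = fun i : Fin d => B (q' (i + 1)) := by
    funext i
    rw [hq (i + 1) (by omega)]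
  rw [h1, hq 0 (by omega)]

theorem bbox_finite_verification {K W H₁ H₂ : Type*} [Field K]
    [AddCommGroup W] [Module K W] [FiniteDimensional K W]
    [AddCommGroup H₁] [Module K H₁] [FiniteDimensional K H₁]
    [AddCommGroup H₂] [Module K H₂] [FiniteDimensional K H₂]
    {Q : Type*}
    (B₁ : Q → (H₁ →ₗ[K] H₁)) (B₂ : Q → (H₂ →ₗ[K] H₂))
    (G₁ : Q → (W →ₗ[K] H₁)) (G₂ : Q → (W →ₗ[K] H₂))
    (C₁ : H₁ →ₗ[K] K) (C₂ : H₂ →ₗ[K] K)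
    (N : ℕ) (hN : N = Module.finrank K H₁ + Module.finrank K H₂)
    (h : ∀ d ≤ N, ∀ q : ℕ → Q,
      C₁ ∘ₗ ((List.ofFn fun i : Fin d => B₁ (q (i + 1))).foldl
        (fun g f => f ∘ₗ g) (G₁ (q 0)))
      = C₂ ∘ₗ ((List.ofFn fun i : Fin d => B₂ (q (i + 1))).foldl
        (fun g f => f ∘ₗ g) (G₂ (q 0)))) :
    ∀ d : ℕ, ∀ q : ℕ → Q,
      C₁ ∘ₗ ((List.ofFn fun i : Fin d => B₁ (q (i + 1))).foldl
        (fun g f => f ∘ₗ g) (G₁ (q 0)))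
      = C₂ ∘ₗ ((List.ofFn fun i : Fin d => B₂ (q (i + 1))).foldl
        (fun g f => f ∘ₗ g) (G₂ (q 0))) := by
  classical
  set F₁ : ℕ → (ℕ → Q) → (W →ₗ[K] H₁) := fun d q =>
    (List.ofFn fun i : Fin d => B₁ (q (i + 1))).foldl (fun g f => f ∘ₗ g) (G₁ (q 0)) with hF₁
  set F₂ : ℕ → (ℕ → Q) → (W →ₗ[K] H₂) := fun d q =>
    (List.ofFn fun i : Fin d => B₂ (q (i + 1))).foldl (fun g f => f ∘ₗ g) (G₂ (q 0)) with hF₂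
  set vecP : ℕ → (ℕ → Q) → (W →ₗ[K] H₁ × H₂) := fun d q => (F₁ d q).prod (F₂ d q) with hvecP
  set B' : Q → (H₁ × H₂ →ₗ[K] H₁ × H₂) := fun p => (B₁ p).prodMap (B₂ p) with hB'
  set S : ℕ → Submodule K (H₁ × H₂) := fun d =>
    Submodule.span K {x | ∃ d' ≤ d, ∃ q : ℕ → Q, ∃ w : W, x = vecP d' q w} with hS
  -- recursion for components
  have hsucc₁ : ∀ (d : ℕ) (q : ℕ → Q), F₁ (d+1) q = B₁ (q (d+1)) ∘ₗ F₁ d q := fun d q =>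
    foldl_ofFn_succ_aux (fun n => B₁ (q (n+1))) (G₁ (q 0)) d
  have hsucc₂ : ∀ (d : ℕ) (q : ℕ → Q), F₂ (d+1) q = B₂ (q (d+1)) ∘ₗ F₂ d q := fun d q =>
    foldl_ofFn_succ_aux (fun n => B₂ (q (n+1))) (G₂ (q 0)) d
  have hvsucc : ∀ (d : ℕ) (q : ℕ → Q) (w : W),
      vecP (d+1) q w = B' (q (d+1)) (vecP d q w) := by
    intro d q w
    simp [hvecP, hB', hsucc₁ d q, hsucc₂ d q]
  have hmono : ∀ {d e : ℕ}, d ≤ e → S d ≤ S e := by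
    intro d e hde
    apply Submodule.span_mono
    rintro x ⟨d', hd', q, w, rfl⟩
    exact ⟨d', hd'.trans hde, q, w, rfl⟩
  have hmap : ∀ (p : Q) (d : ℕ), (S d).map (B' p) ≤ S (d+1) := by
    intro p d
    rw [hS, Submodule.map_span_le]
    rintro x ⟨d', hd', q, w, rfl⟩
    set q' : ℕ → Q := fun n => if n ≤ d' then q n else p with hq'
    have hcg₁ : F₁ d' q = F₁ d' q' := by
      apply foldl_congr_aux
      intro n hn; simp [hq', hn]
    have hcg₂ : F₂ d' q = F₂ d' q' := by
      apply foldl_congr_aux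
      intro n hn; simp [hq', hn]
    have hq'top : q' (d'+1) = p := by simp [hq']
    have : B' p (vecP d' q w) = vecP (d'+1) q' w := by
      rw [hvsucc d' q' w, hq'top]
      simp [hvecP, hcg₁, hcg₂]
    rw [this]
    exact Submodule.subset_span ⟨d'+1, by omega, q', w, rfl⟩
  have hstep : ∀ d : ℕ, S (d+1) ≤ S d ⊔ ⨆ p : Q, (S d).map (B' p) := by
    intro d
    rw [hS, Submodule.span_le]
    rintro x ⟨d', hd', q, w, rfl⟩
    rcases Nat.lt_or_ge d' (d+1) with hlt | hge
    · exact Submodule.mem_sup_left (Submodule.subset_span ⟨d', by omega, q, w, rfl⟩)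
    · have hd'e : d' = d + 1 := le_antisymm hd' hge
      subst hd'e
      rw [hvsucc d q w]
      refine Submodule.mem_sup_right ?_
      refine Submodule.mem_iSup_of_mem (q (d+1)) ?_
      exact Submodule.mem_map_of_mem (Submodule.subset_span ⟨d, le_refl d, q, w, rfl⟩)
  have hstab : ∀ d : ℕ, S d = S (d+1) → ∀ k : ℕ, S (d+k) = S d := by
    intro d hd k
    induction k with
    | zero => rfl
    | succ k ih =>
      refine le_antisymm ?_ (hmono (by omega))
      calc S (d+k+1) ≤ S (d+k) ⊔ ⨆ p : Q, (S (d+k)).map (B' p) := hstep (d+k)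
        _ = S d ⊔ ⨆ p : Q, (S d).map (B' p) := by rw [ih]
        _ ≤ S d := by
            refine sup_le le_rfl ?_
            refine iSup_le fun p => ?_
            exact (hmap p d).trans hd.symm.le
  have hexists : ∃ d ≤ N, S d = S (d+1) := by
    by_contra hc
    push_neg at hc
    have hlt : ∀ d ≤ N, S d < S (d+1) := fun d hd =>
      lt_of_le_of_ne (hmono (by omega)) (hc d hd)
    have hrank : ∀ k ≤ N + 1, k ≤ Module.finrank K (S k) := by
      intro k hk
      induction k with
      | zero => omega
      | succ k ih =>
        have h1 : k ≤ Module.finrank K (S k) := ih (by omega)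
        have h2 : Module.finrank K (S k) < Module.finrank K (S (k+1)) :=
          Submodule.finrank_lt_finrank_of_lt (hlt k (by omega))
        omega
    have h1 : N + 1 ≤ Module.finrank K (S (N+1)) := hrank (N+1) le_rfl
    have h2 : Module.finrank K (S (N+1)) ≤ Module.finrank K (H₁ × H₂) :=
      Submodule.finrank_le _
    have h3 : Module.finrank K (H₁ × H₂) = N := by
      rw [Module.finrank_prod, hN]
    omega
  obtain ⟨d₀, hd₀N, hd₀⟩ := hexists
  have hall : ∀ e : ℕ, S e ≤ S N := by
    intro e
    rcases le_or_gt e N with he | he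
    · exact hmono he
    · have h1 : S (d₀ + (e - d₀)) = S d₀ := hstab d₀ hd₀ (e - d₀)
      have h2 : d₀ + (e - d₀) = e := by omega
      rw [h2] at h1
      rw [h1]
      exact hmono hd₀N
  set φ : (H₁ × H₂) →ₗ[K] K :=
    C₁ ∘ₗ LinearMap.fst K H₁ H₂ - C₂ ∘ₗ LinearMap.snd K H₁ H₂ with hφdef
  have hφ : S N ≤ LinearMap.ker φ := by
    rw [hS, Submodule.span_le]
    rintro x ⟨d', hd', q, w, rfl⟩
    have := congrArg (fun f : W →ₗ[K] K => f w) (h d' hd' q)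
    simp only [LinearMap.comp_apply] at this
    simp only [SetLike.mem_coe, LinearMap.mem_ker, hφdef, hvecP]
    exact sub_eq_zero.mpr this
  intro d q
  ext w
  have hmem : vecP d q w ∈ S N :=
    hall d (Submodule.subset_span ⟨d, le_refl d, q, w, rfl⟩)
  have := hφ hmem
  rw [LinearMap.mem_ker] at this
  simp only [hφdef, LinearMap.sub_apply, LinearMap.comp_apply, LinearMap.fst_apply,
    LinearMap.snd_apply, hvecP, LinearMap.prod_apply, Pi.prod] at this
  simpa [sub_eq_zero] using this
end
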